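/- arXiv:2603.08793 — 4 statements merged into one kernel-verified Lean document; each statement's English description precedes it below -/
import Mathlib

section
/- For every positive integer n and every n×n complex matrix A, the permanent of A equals the average of the Glynn estimator over all sign vectors: Per(A) = 2^{−n} Σ_{x ∈ {−1,1}^n} Gly_x(A). -/
/-- The Glynn estimator of an `n × n` complex matrix `A` at a sign vector `x`:
`Gly_x(A) = x_1 ⋯ x_n ∏_i (a_{i,1} x_1 + ⋯ + a_{i,n} x_n)`. -/
noncomputable def glynn {n : ℕ} (A : Matrix (Fin n) (Fin n) ℂ) (x : Fin n → ℂ) : ℂ :=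
  (∏ i, x i) * ∏ i, ∑ j, A i j * x j

/-- The permanent of an `n × n` complex matrix. -/
noncomputable def permanent {n : ℕ} (A : Matrix (Fin n) (Fin n) ℂ) : ℂ :=
  ∑ σ : Equiv.Perm (Fin n), ∏ i, A i (σ i)

open Finset

/-- For every positive `n` and every `n × n` complex matrix `A`, the permanent of `A`
equals the average of the Glynn estimator over all sign vectors `x ∈ {-1, 1}ⁿ`:
`Per(A) = 2^{-n} ∑_{x ∈ {-1,1}ⁿ} Gly_x(A)`. -/
theorem permanent_eq_average_glynn (n : ℕ) (hn : 0 < n) (A : Matrix (Fin n) (Fin n) ℂ) :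
    permanent A =
      (2 : ℂ) ^ (-(n : ℤ)) *
        ∑ x ∈ Fintype.piFinset (fun _ : Fin n => ({-1, 1} : Finset ℂ)), glynn A x := by
  classical
  set c : (Fin n → Fin n) → Fin n → ℕ :=
    fun f j => (univ.filter (fun i => f i = j)).card with hc
  -- sum of fiber sizes is n
  have hcsum : ∀ f : Fin n → Fin n, ∑ j, c f j = n := by
    intro f
    have := Finset.card_eq_sum_card_fiberwise
      (f := f) (s := univ) (t := univ) (fun i _ => mem_univ (f i))
    simpa [hc] using this.symm
  -- bijectivity from all-fibers-odd
  have hodd : ∀ f : Fin n → Fin n, (∀ j, Odd (c f j)) → Function.Bijective f := by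
    intro f hf
    have h1 : ∀ j ∈ (univ : Finset (Fin n)), 1 ≤ c f j := fun j _ => (hf j).pos
    have hsum1 : ∑ j : Fin n, (1 : ℕ) = ∑ j, c f j := by
      simp [hcsum f]
    have heach : ∀ j ∈ (univ : Finset (Fin n)), (1 : ℕ) = c f j :=
      (Finset.sum_eq_sum_iff_of_le h1).1 hsum1
    have hinj : Function.Injective f := by
      intro a b hab
      have hcard : (univ.filter (fun i => f i = f b)).card = 1 :=
        (heach (f b) (mem_univ _)).symm
      obtain ⟨i0, hi0⟩ := Finset.card_eq_one.1 hcard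
      have ha : a ∈ univ.filter (fun i => f i = f b) := by simp [hab]
      have hb : b ∈ univ.filter (fun i => f i = f b) := by simp
      rw [hi0, mem_singleton] at ha hb
      rw [ha, hb]
    exact (Finite.injective_iff_bijective).1 hinj
  -- bijectivity gives fiber cards 1
  have hbijc : ∀ f : Fin n → Fin n, Function.Bijective f → ∀ j, c f j = 1 := by
    intro f hf j
    obtain ⟨i0, hi0⟩ := hf.2 j
    have : univ.filter (fun i => f i = j) = {i0} := by
      ext i
      simp only [mem_filter, mem_univ, true_and, mem_singleton]
      constructor
      · intro h; exact hf.1 (h.trans hi0.symm)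
      · rintro rfl; exact hi0
    simp [hc, this]
  -- expand glynn
  have h1 : ∀ x : Fin n → ℂ, glynn A x
      = ∑ f ∈ Fintype.piFinset (fun _ : Fin n => (univ : Finset (Fin n))),
          (∏ i, A i (f i)) * ∏ j, x j ^ (c f j + 1) := by
    intro x
    unfold glynn
    rw [Finset.prod_univ_sum, Finset.mul_sum]
    refine Finset.sum_congr rfl fun f _ => ?_
    have h2 : ∏ i, x (f i) = ∏ j, x j ^ c f j := by
      rw [← Finset.prod_fiberwise' univ f x]
      simp [hc]
    have h3 : ∏ j, x j ^ (c f j + 1) = (∏ j, x j) * ∏ j, x j ^ c f j := by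
      simp [pow_succ, Finset.prod_mul_distrib, mul_comm]
    rw [Finset.prod_mul_distrib, h3, ← h2]; ring
  -- swap sums
  have key : ∑ x ∈ Fintype.piFinset (fun _ : Fin n => ({-1, 1} : Finset ℂ)), glynn A x
      = ∑ f ∈ Fintype.piFinset (fun _ : Fin n => (univ : Finset (Fin n))),
          (∏ i, A i (f i)) * ∏ j, ((-1 : ℂ) ^ (c f j + 1) + 1) := by
    rw [Finset.sum_congr rfl (fun x _ => h1 x), Finset.sum_comm]
    refine Finset.sum_congr rfl fun f _ => ?_
    rw [← Finset.mul_sum, ← Finset.prod_univ_sum (fun _ => ({-1,1} : Finset ℂ)) (fun j s => s ^ (c f j + 1))]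
    congr 1
    refine Finset.prod_congr rfl fun j _ => ?_
    rw [Finset.sum_pair (by norm_num : (-1 : ℂ) ≠ 1)]
    simp
  -- evaluate the sign factor
  have hfac : ∀ f : Fin n → Fin n,
      (∏ j, ((-1 : ℂ) ^ (c f j + 1) + 1))
        = if Function.Bijective f then (2 : ℂ) ^ n else 0 := by
    intro f
    by_cases hf : Function.Bijective f
    · rw [if_pos hf]
      have : ∀ j, ((-1 : ℂ) ^ (c f j + 1) + 1) = 2 := by
        intro j; rw [hbijc f hf j]; norm_num
      simp [this]
    · rw [if_neg hf]
      have : ∃ j, ¬ Odd (c f j) := by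
        by_contra h
        push_neg at h
        exact hf (hodd f h)
      obtain ⟨j, hj⟩ := this
      have hev : Even (c f j) := Nat.not_odd_iff_even.1 hj
      refine Finset.prod_eq_zero (mem_univ j) ?_
      have : Odd (c f j + 1) := Even.add_one hev
      rw [this.neg_one_pow]
      ring
  rw [key]
  have key2 : ∑ f ∈ Fintype.piFinset (fun _ : Fin n => (univ : Finset (Fin n))),
      (∏ i, A i (f i)) * ∏ j, ((-1 : ℂ) ^ (c f j + 1) + 1)
      = (2 : ℂ) ^ n * permanent A := by
    rw [Finset.sum_congr rfl fun f _ => by rw [hfac f]]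
    have : ∀ f : Fin n → Fin n,
        (∏ i, A i (f i)) * (if Function.Bijective f then (2 : ℂ) ^ n else 0)
        = if Function.Bijective f then (2 : ℂ) ^ n * ∏ i, A i (f i) else 0 := by
      intro f; split <;> ring
    rw [Finset.sum_congr rfl fun f _ => this f]
    have hpi : Fintype.piFinset (fun _ : Fin n => (univ : Finset (Fin n)))
        = (univ : Finset (Fin n → Fin n)) := by
      ext f; simp
    rw [hpi, ← Finset.sum_filter, ← Finset.mul_sum]
    congr 1
    unfold permanent
    refine (Finset.sum_bij (fun (σ : Equiv.Perm (Fin n)) _ => ⇑σ) ?_ ?_ ?_ ?_).symm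
    · intro σ _; exact Finset.mem_filter.2 ⟨mem_univ _, σ.bijective⟩
    · intro σ _ τ _ h
      exact Equiv.coe_fn_injective h
    · intro f hf
      simp only [mem_filter, mem_univ, true_and] at hf
      exact ⟨Equiv.ofBijective f hf, mem_univ _, rfl⟩
    · intro σ _; rfl
  rw [key2, ← mul_assoc]
  rw [zpow_neg, zpow_natCast]
  rw [inv_mul_cancel₀ (pow_ne_zero n two_ne_zero), one_mul]
end

section
/- For every positive integer n, every n×n complex matrix A, and every sign vector x ∈ {−1,1}^n, the Glynn estimator is bounded by the n-th power of the operator norm: |Gly_x(A)| ≤ ‖A‖^n. -/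
open scoped Matrix.Norms.L2Operator

/-!
For a unimodular vector `x`, `|Gly_x(A)|` is the product of the moduli of the coordinates of
`y = A x`. By AM-GM this product is at most `(‖y‖² / n)^(n/2)`, and `‖y‖² ≤ ‖A‖² ‖x‖² = ‖A‖² n`.
-/

open Finset Matrix

theorem Real.prod_le_arith_mean_pow {ι : Type*} (s : Finset ι) {z : ι → ℝ}
    (hz : ∀ i ∈ s, 0 ≤ z i) : ∏ i ∈ s, z i ≤ ((∑ i ∈ s, z i) / #s) ^ #s := by
  rcases s.eq_empty_or_nonempty with rfl | hs
  · simp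
  have hcard : (0 : ℝ) < #s := by exact_mod_cast hs.card_pos
  have hprod : 0 ≤ ∏ i ∈ s, z i := prod_nonneg hz
  have amgm := Real.geom_mean_le_arith_mean s (fun _ ↦ 1) z (fun _ _ ↦ zero_le_one)
    (by simpa using hcard) hz
  simp only [Real.rpow_one, sum_const, nsmul_eq_mul, mul_one, one_mul] at amgm
  calc ∏ i ∈ s, z i = ((∏ i ∈ s, z i) ^ (#s : ℝ)⁻¹) ^ #s := by
        rw [← Real.rpow_natCast, ← Real.rpow_mul hprod, inv_mul_cancel₀ hcard.ne', Real.rpow_one]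
    _ ≤ ((∑ i ∈ s, z i) / #s) ^ #s := by gcongr

theorem Matrix.sum_norm_mulVec_sq_le {𝕜 m n : Type*} [RCLike 𝕜] [Fintype m] [Fintype n]
    [DecidableEq n] (A : Matrix m n 𝕜) (v : n → 𝕜) :
    ∑ i, ‖(A *ᵥ v) i‖ ^ 2 ≤ ‖A‖ ^ 2 * ∑ j, ‖v j‖ ^ 2 := by
  have h := A.l2_opNorm_mulVec (WithLp.toLp 2 v)
  rw [← EuclideanSpace.norm_sq_eq (WithLp.toLp 2 v), ← mul_pow]
  simpa [EuclideanSpace.norm_sq_eq] using pow_le_pow_left₀ (norm_nonneg _) h 2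

theorem norm_glynn_of_norm_eq_one {n : ℕ} (A : Matrix (Fin n) (Fin n) ℂ) {x : Fin n → ℂ}
    (hx : ∀ i, ‖x i‖ = 1) : ‖glynn A x‖ = ∏ i, ‖(A *ᵥ x) i‖ := by
  simp [glynn, norm_prod, hx, mulVec, dotProduct]

theorem abs_glynn_le_opNorm_pow_general (n : ℕ) (A : Matrix (Fin n) (Fin n) ℂ)
    (x : Fin n → ℂ) (hx : ∀ i, x i = -1 ∨ x i = 1) :
    ‖glynn A x‖ ≤ ‖A‖ ^ n := by
  have hx_norm : ∀ i, ‖x i‖ = 1 := fun i ↦ by rcases hx i with h | h <;> simp [h]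
  have hy : ∑ i, ‖(A *ᵥ x) i‖ ^ 2 ≤ ‖A‖ ^ 2 * n := by
    simpa [hx_norm] using A.sum_norm_mulVec_sq_le x
  rw [norm_glynn_of_norm_eq_one A hx_norm]
  refine le_of_sq_le_sq ?_ (by positivity)
  calc (∏ i, ‖(A *ᵥ x) i‖) ^ 2 ≤ ((∑ i, ‖(A *ᵥ x) i‖ ^ 2) / n) ^ n := by
        simpa [← prod_pow] using Real.prod_le_arith_mean_pow univ fun i _ ↦ sq_nonneg ‖(A *ᵥ x) i‖
    _ ≤ (‖A‖ ^ 2) ^ n := by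
        gcongr
        exact div_le_of_le_mul₀ n.cast_nonneg (sq_nonneg _) hy
    _ = (‖A‖ ^ n) ^ 2 := by ring

/-- For every positive `n`, every `n × n` complex matrix `A` and every sign vector
`x ∈ {-1, 1}ⁿ`, the Glynn estimator is bounded by the `n`-th power of the ℓ² → ℓ²
operator norm of `A`: `|Gly_x(A)| ≤ ‖A‖ⁿ`. -/
theorem abs_glynn_le_opNorm_pow (n : ℕ) (hn : 0 < n) (A : Matrix (Fin n) (Fin n) ℂ)
    (x : Fin n → ℂ) (hx : ∀ i, x i = -1 ∨ x i = 1) :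
    ‖glynn A x‖ ≤ ‖A‖ ^ n :=
  abs_glynn_le_opNorm_pow_general n A x hx
end

section
/- For every positive integer n and every n×n complex matrix A, the permanent satisfies |Per(A)| ≤ ‖A‖^n; in particular, if ‖A‖ ≤ 1 then |Per(A)| ≤ 1. -/
open scoped Matrix.Norms.L2Operator

/-!
Glynn's formula writes `2ⁿ · Per(A)` as the sum over the `2ⁿ` sign vectors `ε ∈ {±1}ⁿ` of
`(∏ εᵢ) · ∏ⱼ (εᵀA)ⱼ`. As `‖ε‖₂ = √n`, the row vector `εᵀA` has `ℓ²`-norm at most `‖A‖ √n`, so by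
AM–GM the product of the absolute values of its `n` entries is at most `‖A‖ⁿ`. Averaging over
`ε` gives `|Per(A)| ≤ ‖A‖ⁿ`.
-/

open Finset
open scoped Matrix

lemma sum_units_int_pow {R : Type*} [Ring R] (k : ℕ) :
    ∑ u : ℤˣ, ((u : ℤ) : R) ^ k = 1 + (-1) ^ k := by
  simp

section Signs

variable {ι R : Type*} [Fintype ι] [DecidableEq ι] [CommRing R]

/- The sum factors as `∏ i, ∑ u = ±1, u ^ (1 + #f⁻¹{i})`, whose `i`-th factor vanishes iff the
fibre `f⁻¹{i}` has even size; a non-bijective `f` has an empty fibre. -/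
lemma sum_prod_units_int_mul_prod_comp (f : ι → ι) :
    ∑ ε : ι → ℤˣ, (∏ i, ((ε i : ℤ) : R)) * ∏ j, ((ε (f j) : ℤ) : R) =
      if f.Bijective then 2 ^ Fintype.card ι else 0 := by
  have hfiber (ε : ι → ℤˣ) : (∏ i, ((ε i : ℤ) : R)) * ∏ j, ((ε (f j) : ℤ) : R) =
      ∏ i, ((ε i : ℤ) : R) ^ (#{j | f j = i} + 1) := by
    rw [← Finset.prod_fiberwise' univ f (fun i => ((ε i : ℤ) : R)), ← prod_mul_distrib]
    simp_rw [prod_const, pow_succ']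
  simp_rw [hfiber, ← Fintype.prod_sum (fun i (u : ℤˣ) => ((u : ℤ) : R) ^ (#{j | f j = i} + 1)),
    sum_units_int_pow]
  split_ifs with hf
  · have hcard (i : ι) : #{j | f j = i} = 1 := by
      obtain ⟨j, rfl⟩ := hf.2 i
      exact card_eq_one.2 ⟨j, by ext; simp [hf.1.eq_iff]⟩
    norm_num [hcard]
  · obtain ⟨i, hi⟩ : ∃ i, ∀ j, f j ≠ i := by
      simpa [Function.Surjective] using mt Finite.surjective_iff_bijective.1 hf
    exact prod_eq_zero (mem_univ i) (by simp [filter_false_of_mem fun j _ => hi j])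

theorem Matrix.two_pow_card_mul_permanent (M : Matrix ι ι R) :
    2 ^ Fintype.card ι * M.permanent =
      ∑ ε : ι → ℤˣ, (∏ i, ((ε i : ℤ) : R)) * ∏ j, ∑ i, ((ε i : ℤ) : R) * M i j := by
  have hexpand (ε : ι → ℤˣ) : (∏ i, ((ε i : ℤ) : R)) * ∏ j, ∑ i, ((ε i : ℤ) : R) * M i j =
      ∑ f : ι → ι, ((∏ i, ((ε i : ℤ) : R)) * ∏ j, ((ε (f j) : ℤ) : R)) * ∏ j, M (f j) j := by
    simp_rw [Fintype.prod_sum, mul_sum, prod_mul_distrib, mul_assoc]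
  simp_rw [hexpand, sum_comm (γ := ι → ℤˣ), ← sum_mul, sum_prod_units_int_mul_prod_comp, ite_mul,
    zero_mul, sum_ite, sum_const_zero, add_zero, ← mul_sum]
  congr 1
  exact sum_bij (fun σ _ => ⇑σ) (fun σ _ => mem_filter.2 ⟨mem_univ _, σ.bijective⟩)
    (fun σ _ τ _ h => Equiv.coe_fn_injective h)
    (fun f hf => ⟨Equiv.ofBijective f (mem_filter.1 hf).2, mem_univ _, rfl⟩) (fun _ _ => rfl)

end Signs

lemma Real.prod_le_arith_mean_pow_card {ι : Type*} (s : Finset ι) (z : ι → ℝ)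
    (hz : ∀ i ∈ s, 0 ≤ z i) : ∏ i ∈ s, z i ≤ ((∑ i ∈ s, z i) / #s) ^ #s := by
  rcases s.eq_empty_or_nonempty with rfl | hs
  · simp
  have amgm := Real.geom_mean_le_arith_mean s (fun _ => 1) z (fun _ _ => zero_le_one)
    (by simpa using hs) hz
  simp only [Real.rpow_one, one_mul, sum_const, nsmul_eq_mul, mul_one] at amgm
  calc ∏ i ∈ s, z i = ((∏ i ∈ s, z i) ^ ((#s : ℝ)⁻¹)) ^ #s :=
        (Real.rpow_inv_natCast_pow (prod_nonneg hz) (by simpa using hs.ne_empty)).symm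
    _ ≤ _ := by gcongr; exact Real.rpow_nonneg (prod_nonneg hz) _

section RCLike

variable {𝕜 : Type*} [RCLike 𝕜]

lemma EuclideanSpace.prod_norm_le_pow_card {ι : Type*} [Fintype ι] (x : EuclideanSpace 𝕜 ι)
    {c : ℝ} (hc : 0 ≤ c) (hx : ‖x‖ ≤ c * √(Fintype.card ι)) :
    ∏ i, ‖x i‖ ≤ c ^ Fintype.card ι := by
  have hsq : ‖x‖ ^ 2 / Fintype.card ι ≤ c ^ 2 :=
    div_le_of_le_mul₀ (by positivity) (by positivity) <| by
      calc ‖x‖ ^ 2 ≤ (c * √(Fintype.card ι)) ^ 2 := by gcongr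
        _ = c ^ 2 * Fintype.card ι := by rw [mul_pow, Real.sq_sqrt (by positivity)]
  refine (pow_le_pow_iff_left₀ (by positivity) (by positivity) two_ne_zero).1 ?_
  calc (∏ i, ‖x i‖) ^ 2 = ∏ i, ‖x i‖ ^ 2 := (prod_pow _ _ _).symm
    _ ≤ ((∑ i, ‖x i‖ ^ 2) / Fintype.card ι) ^ Fintype.card ι :=
        Real.prod_le_arith_mean_pow_card _ _ fun _ _ => by positivity
    _ ≤ (c ^ 2) ^ Fintype.card ι := by
        rw [← EuclideanSpace.norm_sq_eq]; gcongr
    _ = (c ^ Fintype.card ι) ^ 2 := by ring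

lemma Matrix.l2_opNorm_vecMul {m n : Type*} [Fintype m] [Fintype n] [DecidableEq m]
    [DecidableEq n] (A : Matrix m n 𝕜) (x : EuclideanSpace 𝕜 m) :
    ‖(EuclideanSpace.equiv n 𝕜).symm (x ᵥ* A)‖ ≤ ‖A‖ * ‖x‖ := by
  have h := Aᴴ.l2_opNorm_mulVec (WithLp.toLp 2 (star x.ofLp))
  rw [Matrix.l2_opNorm_conjTranspose, ← Matrix.star_vecMul] at h
  convert h using 1 <;> simp [EuclideanSpace.norm_eq]

lemma norm_intCast_units (u : ℤˣ) : ‖((u : ℤ) : 𝕜)‖ = 1 := by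
  rcases Int.units_eq_one_or u with rfl | rfl <;> simp

lemma Matrix.prod_norm_vecMul_le {ι : Type*} [Fintype ι] [DecidableEq ι] (A : Matrix ι ι 𝕜)
    (v : ι → 𝕜) (hv : ∀ i, ‖v i‖ = 1) : ∏ j, ‖(v ᵥ* A) j‖ ≤ ‖A‖ ^ Fintype.card ι := by
  have hvnorm : ‖WithLp.toLp 2 v‖ = √(Fintype.card ι) := by
    simp [EuclideanSpace.norm_eq, hv]
  exact EuclideanSpace.prod_norm_le_pow_card (WithLp.toLp 2 (v ᵥ* A)) (norm_nonneg A)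
    (hvnorm ▸ A.l2_opNorm_vecMul (WithLp.toLp 2 v))

theorem Matrix.norm_permanent_le_l2_opNorm_pow {ι : Type*} [Fintype ι] [DecidableEq ι]
    (A : Matrix ι ι 𝕜) : ‖A.permanent‖ ≤ ‖A‖ ^ Fintype.card ι := by
  have hterm (ε : ι → ℤˣ) :
      ‖(∏ i, ((ε i : ℤ) : 𝕜)) * ∏ j, ∑ i, ((ε i : ℤ) : 𝕜) * A i j‖ ≤ ‖A‖ ^ Fintype.card ι := by
    simp only [norm_mul, norm_prod, norm_intCast_units, prod_const_one, one_mul]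
    exact A.prod_norm_vecMul_le (fun i => ((ε i : ℤ) : 𝕜)) fun i => norm_intCast_units (ε i)
  refine le_of_mul_le_mul_left ?_ (by positivity : (0 : ℝ) < 2 ^ Fintype.card ι)
  calc 2 ^ Fintype.card ι * ‖A.permanent‖ = ‖2 ^ Fintype.card ι * A.permanent‖ := by simp
    _ ≤ ∑ ε : ι → ℤˣ, ‖A‖ ^ Fintype.card ι := by
        rw [A.two_pow_card_mul_permanent]
        exact norm_sum_le_of_le _ fun ε _ => hterm ε
    _ = 2 ^ Fintype.card ι * ‖A‖ ^ Fintype.card ι := by simp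

end RCLike

theorem abs_permanent_le_opNorm_pow_general (n : ℕ) (A : Matrix (Fin n) (Fin n) ℂ) :
    ‖permanent A‖ ≤ ‖A‖ ^ n ∧ (‖A‖ ≤ 1 → ‖permanent A‖ ≤ 1) := by
  have hper : permanent A = A.permanent := A.permanent_transpose
  have hbound : ‖permanent A‖ ≤ ‖A‖ ^ n := by
    simpa [hper] using A.norm_permanent_le_l2_opNorm_pow
  exact ⟨hbound, fun h => hbound.trans (pow_le_one₀ (norm_nonneg A) h)⟩

/-- For every positive `n` and every `n × n` complex matrix `A`, the permanent satisfies
`|Per(A)| ≤ ‖A‖ⁿ` (with `‖A‖` the ℓ² → ℓ² operator norm); in particular, if `‖A‖ ≤ 1`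
then `|Per(A)| ≤ 1`. -/
theorem abs_permanent_le_opNorm_pow (n : ℕ) (hn : 0 < n) (A : Matrix (Fin n) (Fin n) ℂ) :
    ‖permanent A‖ ≤ ‖A‖ ^ n ∧ (‖A‖ ≤ 1 → ‖permanent A‖ ≤ 1) :=
  abs_permanent_le_opNorm_pow_general n A
end

section
/- For every bandwidth σ > 0, every positive integer m, and all x, y ∈ {0,1}^m: Σ_{k ∈ {0,1}^m} P_σ(k)(−1)^{k·x}(−1)^{k·y} = exp(−(1/(2σ²)) Σ_{i=1}^m (x_i−y_i)²); that is, the Gaussian kernel K_σ(x,y) on binary vectors equals the expectation of the character product (−1)^{k·x}(−1)^{k·y} under the product Bernoulli distribution P_σ. -/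
/-- `p_σ = (1 - e^{-1/(2σ²)})/2`. -/
noncomputable def pSigma (σ : ℝ) : ℝ := (1 - Real.exp (-(1 / (2 * σ ^ 2)))) / 2

/-- The product Bernoulli distribution `P_σ(k) = p_σ^{|k|} (1-p_σ)^{m-|k|}` on bitstrings
`k ∈ {0,1}^m`, where `|k|` is the Hamming weight of `k`. -/
noncomputable def Psigma {m : ℕ} (σ : ℝ) (k : Fin m → ℕ) : ℝ :=
  pSigma σ ^ (∑ i, k i) * (1 - pSigma σ) ^ (m - ∑ i, k i)

/-- For every bandwidth `σ > 0`, every positive integer `m`, and all `x, y ∈ {0,1}^m`: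
`∑_{k ∈ {0,1}^m} P_σ(k) (-1)^{k·x} (-1)^{k·y} = exp(-(1/(2σ²)) ∑ᵢ (xᵢ - yᵢ)²)`;
the Gaussian kernel on binary vectors equals the expectation of the character product
`(-1)^{k·x} (-1)^{k·y}` under the product Bernoulli distribution `P_σ`. -/
theorem gaussian_kernel_eq_bernoulli_character_expectation (σ : ℝ) (hσ : 0 < σ)
    (m : ℕ) (hm : 0 < m) (x y : Fin m → ℕ)
    (hx : ∀ i, x i = 0 ∨ x i = 1) (hy : ∀ i, y i = 0 ∨ y i = 1) :
    ∑ k ∈ Fintype.piFinset (fun _ : Fin m => ({0, 1} : Finset ℕ)),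
        Psigma σ k * (-1 : ℝ) ^ (∑ i, k i * x i) * (-1 : ℝ) ^ (∑ i, k i * y i)
      = Real.exp (-(1 / (2 * σ ^ 2)) * ∑ i, ((x i : ℝ) - (y i : ℝ)) ^ 2) := by
  set c : ℝ := -(1 / (2 * σ ^ 2)) with hc
  set p : ℝ := pSigma σ with hp
  have key : ∀ k ∈ Fintype.piFinset (fun _ : Fin m => ({0, 1} : Finset ℕ)),
      Psigma σ k * (-1 : ℝ) ^ (∑ i, k i * x i) * (-1 : ℝ) ^ (∑ i, k i * y i)
      = ∏ i, ((if k i = 0 then (1 - p) else p) * (-1 : ℝ) ^ (k i * x i) *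
          (-1 : ℝ) ^ (k i * y i)) := by
    intro k hk
    have hk1 : ∀ i, k i ≤ 1 := by
      intro i
      have := (Fintype.mem_piFinset.mp hk) i
      simp only [Finset.mem_insert, Finset.mem_singleton] at this
      omega
    have hsub : m - ∑ i, k i = ∑ i, (1 - k i) := by
      rw [Finset.sum_tsub_distrib _ (fun i _ => hk1 i)]
      simp
    have hP : Psigma σ k = ∏ i, (if k i = 0 then (1 - p) else p) := by
      rw [Psigma, hsub, ← Finset.prod_pow_eq_pow_sum, ← Finset.prod_pow_eq_pow_sum,
        ← Finset.prod_mul_distrib]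
      refine Finset.prod_congr rfl fun i _ => ?_
      rcases Nat.le_one_iff_eq_zero_or_eq_one.mp (hk1 i) with h | h <;> simp [h, hp]
    rw [hP, ← Finset.prod_pow_eq_pow_sum (f := fun i => k i * x i),
      ← Finset.prod_pow_eq_pow_sum (f := fun i => k i * y i),
      ← Finset.prod_mul_distrib, ← Finset.prod_mul_distrib]
  rw [Finset.sum_congr rfl key, ← Finset.prod_univ_sum (t := fun _ : Fin m => ({0, 1} : Finset ℕ))
    (f := fun i j => (if j = 0 then (1 - p) else p) * (-1 : ℝ) ^ (j * x i) * (-1 : ℝ) ^ (j * y i))]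
  rw [Finset.mul_sum, Real.exp_sum]
  refine Finset.prod_congr rfl fun i _ => ?_
  have hsum : ∑ k ∈ ({0, 1} : Finset ℕ),
      ((if k = 0 then (1 - p) else p) * (-1 : ℝ) ^ (k * x i) * (-1 : ℝ) ^ (k * y i))
      = (1 - p) + p * (-1 : ℝ) ^ (x i) * (-1 : ℝ) ^ (y i) := by
    simp [Finset.sum_pair]
  rw [hsum]
  have hpval : p = (1 - Real.exp c) / 2 := by rw [hp, pSigma, hc]
  rcases hx i with h1 | h1 <;> rcases hy i with h2 | h2 <;>
    simp [h1, h2, hpval] <;> ring_nf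
end
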